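/- Let I₁(x) = ∑_{k=0}^∞ (x/2)^{2k+1} / (k!·(k+1)!). Then √(2πx)·e^{−x}·I₁(x) → 1 as x → ∞; that is, I₁(x) is asymptotic to e^x / √(2πx) as x → ∞. -/

import Mathlib

open Filter Real

/-- Modified Bessel function of the first kind of order 1. -/
noncomputable def besselI1 (x : ℝ) : ℝ :=
  ∑' k : ℕ, (x / 2) ^ (2 * k + 1) / ((k.factorial : ℝ) * ((k + 1).factorial : ℝ))

section Aux
open MeasureTheory intervalIntegral Set


lemma cos_pow_odd_int (n : ℕ) : ∫ θ in (0:ℝ)..π, Real.cos θ ^ (2 * n + 1) = 0 := by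
  induction n with
  | zero => simp
  | succ k ih =>
    have h := integral_cos_pow (a := 0) (b := π) (n := 2 * k + 1)
    have : 2 * (k + 1) + 1 = (2 * k + 1) + 2 := by ring
    rw [this, h, ih]
    simp [Real.sin_pi]

lemma cos_pow_even_int (n : ℕ) :
    ∫ θ in (0:ℝ)..π, Real.cos θ ^ (2 * n) =
      π * ((2 * n).factorial : ℝ) / (4 ^ n * ((n.factorial : ℝ)) ^ 2) := by
  induction n with
  | zero => simp
  | succ k ih =>
    have h := integral_cos_pow (a := 0) (b := π) (n := 2 * k)
    have e : 2 * (k + 1) = (2 * k) + 2 := by ring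
    rw [e, h, ih]
    have h1 : ((2 * k + 2).factorial : ℝ) = ((2*k:ℝ)+2) * (((2*k:ℝ)+1) * ((2*k).factorial : ℝ)) := by
      have : 2 * k + 2 = (2*k+1) + 1 := by ring
      rw [this]
      push_cast [Nat.factorial_succ]
      ring
    have h2 : (((k+1).factorial : ℝ)) = ((k:ℝ)+1) * (k.factorial : ℝ) := by
      push_cast [Nat.factorial_succ]; ring
    have hf : ((2*k).factorial : ℝ) ≠ 0 := by positivity
    have hf2 : ((k).factorial : ℝ) ≠ 0 := by positivity
    rw [h1, h2]
    have h4 : (4:ℝ) ^ (k+1) = 4 * 4 ^ k := by ring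
    rw [h4, Real.sin_pi, Real.sin_zero]
    have h5 : ((2*k:ℝ)+2) ≠ 0 := by positivity
    field_simp
    push_cast
    ring


lemma exp_mul_cos_tsum (x θ : ℝ) :
    Real.exp (x * Real.cos θ) * Real.cos θ
      = ∑' n : ℕ, (x ^ n / n.factorial) * Real.cos θ ^ (n + 1) := by
  rw [Real.exp_eq_exp_ℝ, NormedSpace.exp_eq_tsum_div, ← tsum_mul_right]
  congr 1; ext n
  rw [mul_pow, pow_succ]
  ring

lemma summable_aux (x : ℝ) :
    Summable (fun n : ℕ => |x| ^ n / (n.factorial : ℝ) * π) :=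
  (Real.summable_pow_div_factorial |x|).mul_right π

lemma besselI1_eq (x : ℝ) :
    besselI1 x = (1 / π) * ∫ θ in (0:ℝ)..π, Real.exp (x * Real.cos θ) * Real.cos θ := by
  set F : ℕ → ℝ → ℝ := fun n θ => (x ^ n / n.factorial) * Real.cos θ ^ (n + 1) with hF
  have hcont : ∀ n, Continuous (F n) := by intro n; fun_prop
  have hF_int : ∀ n, IntegrableOn (F n) (Set.Ioc 0 π) volume := fun n =>
    (hcont n).integrableOn_Ioc
  have hbound : ∀ n θ, ‖F n θ‖ ≤ |x| ^ n / n.factorial := by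
    intro n θ
    rw [hF, norm_mul, norm_div]
    calc ‖x ^ n‖ / ‖(n.factorial : ℝ)‖ * ‖Real.cos θ ^ (n+1)‖
        ≤ |x| ^ n / n.factorial * 1 := by
          have h1 : ‖x ^ n‖ / ‖(n.factorial : ℝ)‖ = |x| ^ n / n.factorial := by
            rw [norm_pow]; simp [Real.norm_eq_abs, Nat.abs_cast]
          rw [h1]
          refine mul_le_mul_of_nonneg_left ?_ (by positivity)
          rw [norm_pow]
          exact pow_le_one₀ (abs_nonneg _) (Real.abs_cos_le_one θ)
      _ = |x| ^ n / n.factorial := mul_one _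
  have hF_sum : Summable fun n => ∫ θ in Set.Ioc (0:ℝ) π, ‖F n θ‖ := by
    refine Summable.of_nonneg_of_le (fun n => integral_nonneg fun θ => norm_nonneg _)
      (fun n => ?_) (summable_aux x)
    calc ∫ θ in Set.Ioc (0:ℝ) π, ‖F n θ‖
        ≤ ∫ _θ in Set.Ioc (0:ℝ) π, (|x| ^ n / n.factorial : ℝ) := by
          refine setIntegral_mono_on (hF_int n).norm (integrableOn_const ?_)
            measurableSet_Ioc (fun θ _ => hbound n θ)
          rw [Real.volume_Ioc]; exact ENNReal.ofReal_ne_top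
      _ = (volume (Set.Ioc (0:ℝ) π)).toReal * (|x| ^ n / n.factorial) := by
          rw [setIntegral_const, smul_eq_mul, measureReal_def]
      _ ≤ |x| ^ n / n.factorial * π := by
          rw [Real.volume_Ioc, sub_zero, ENNReal.toReal_ofReal Real.pi_pos.le, mul_comm]
  have key : (∫ θ in (0:ℝ)..π, Real.exp (x * Real.cos θ) * Real.cos θ)
      = ∑' n : ℕ, (x ^ n / n.factorial) * ∫ θ in (0:ℝ)..π, Real.cos θ ^ (n + 1) := by
    rw [intervalIntegral.integral_of_le Real.pi_pos.le]
    rw [show (fun θ => Real.exp (x * Real.cos θ) * Real.cos θ) = fun θ => ∑' n, F n θ from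
      funext fun θ => exp_mul_cos_tsum x θ]
    rw [← MeasureTheory.integral_tsum_of_summable_integral_norm hF_int hF_sum]
    refine tsum_congr fun n => ?_
    rw [← intervalIntegral.integral_of_le Real.pi_pos.le,
      intervalIntegral.integral_const_mul]
  rw [key]
  set c : ℕ → ℝ := fun m => ∫ θ in (0:ℝ)..π, Real.cos θ ^ m with hc
  set a : ℕ → ℝ := fun n => (x ^ n / n.factorial) * c (n + 1) with ha
  have hcb : ∀ m, ‖c m‖ ≤ π := by
    intro m
    have := intervalIntegral.norm_integral_le_of_norm_le_const
      (f := fun θ => Real.cos θ ^ m) (a := (0:ℝ)) (b := π) (C := 1) (fun θ _ => by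
        rw [norm_pow]
        exact pow_le_one₀ (abs_nonneg _) (Real.abs_cos_le_one θ))
    simpa [abs_of_nonneg Real.pi_pos.le] using this
  have hsa : Summable a := by
    refine Summable.of_norm_bounded (summable_aux x) fun n => ?_
    rw [ha, norm_mul]
    have h1 : ‖x ^ n / (n.factorial:ℝ)‖ = |x| ^ n / n.factorial := by
      rw [norm_div, norm_pow]; simp [Real.norm_eq_abs, Nat.abs_cast]
    rw [h1]
    exact mul_le_mul_of_nonneg_left (hcb _) (by positivity)
  have heven : ∀ k, a (2 * k) = 0 := by
    intro k
    have : c (2 * k + 1) = 0 := cos_pow_odd_int k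
    rw [ha]; simp only [this, mul_zero]
  have hterm : ∀ k : ℕ, (1 / π) * a (2 * k + 1)
      = (x / 2) ^ (2 * k + 1) / ((k.factorial : ℝ) * ((k + 1).factorial : ℝ)) := by
    intro k
    have hcv : c (2 * k + 1 + 1) = π * ((2 * (k+1)).factorial : ℝ)
        / (4 ^ (k+1) * (((k+1).factorial : ℝ)) ^ 2) := by
      rw [hc, show 2 * k + 1 + 1 = 2 * (k + 1) by ring]
      exact cos_pow_even_int (k+1)
    rw [ha]
    simp only [hcv]
    have e1 : ((2 * (k+1)).factorial : ℝ) = (2*(k:ℝ)+2) * (((2*k+1).factorial : ℝ)) := by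
      rw [show 2 * (k+1) = (2*k+1) + 1 by ring, Nat.factorial_succ]
      push_cast; ring
    have e2 : (((k+1).factorial : ℝ)) = ((k:ℝ)+1) * (k.factorial : ℝ) := by
      rw [Nat.factorial_succ]; push_cast; ring
    have e3 : (x / 2) ^ (2*k+1) = x ^ (2*k+1) / 2 ^ (2*k+1) := div_pow x 2 _
    have e4 : (4:ℝ) ^ (k+1) = 2 ^ (2*k+1) * 2 := by
      rw [show (4:ℝ) = 2^2 by norm_num, ← pow_mul]; ring
    have hpi : (π:ℝ) ≠ 0 := Real.pi_ne_zero
    have hf1 : ((2*k+1).factorial : ℝ) ≠ 0 := by positivity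
    have hf2 : ((k).factorial : ℝ) ≠ 0 := by positivity
    have h2p : (2:ℝ) ^ (2*k+1) ≠ 0 := by positivity
    rw [e1, e2, e3, e4]
    field_simp
  calc besselI1 x = ∑' k : ℕ, (1 / π) * a (2 * k + 1) := tsum_congr fun k => (hterm k).symm
    _ = (1 / π) * ∑' k : ℕ, a (2 * k + 1) := tsum_mul_left
    _ = (1 / π) * ((∑' k : ℕ, a (2 * k)) + ∑' k : ℕ, a (2 * k + 1)) := by
        simp only [heven, tsum_zero, zero_add]
    _ = (1 / π) * ∑' n : ℕ, a n := by
        rw [tsum_even_add_odd (hsa.comp_injective fun p q h => by omega)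
          (hsa.comp_injective fun p q h => by omega)]
    _ = (1 / π) * ∑' n : ℕ, (x ^ n / n.factorial) * ∫ θ in (0:ℝ)..π, Real.cos θ ^ (n + 1) := rfl


lemma tendsto_cos_sub_one_div_sq :
    Tendsto (fun u : ℝ => (Real.cos u - 1) / u ^ 2) (nhdsWithin 0 {0}ᶜ) (nhds (-(1/2))) := by
  have hupper : Tendsto (fun u : ℝ => -(1/2) + u ^ 2 * (5/96)) (nhdsWithin 0 {0}ᶜ) (nhds (-(1/2))) := by
    have : Tendsto (fun u : ℝ => -(1/2) + u ^ 2 * (5/96)) (nhds 0) (nhds (-(1/2) + 0 ^ 2 * (5/96))) :=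
      (Continuous.tendsto (by fun_prop) 0)
    simpa using this.mono_left nhdsWithin_le_nhds
  refine tendsto_of_tendsto_of_tendsto_of_le_of_le' tendsto_const_nhds hupper ?_ ?_
  · filter_upwards [self_mem_nhdsWithin] with u (hu : u ≠ 0)
    have h := Real.one_sub_sq_div_two_lt_cos (x := u) hu
    have hu2 : (0:ℝ) < u ^ 2 := by positivity
    rw [le_div_iff₀ hu2]
    nlinarith
  · have h1 : ∀ᶠ u : ℝ in nhdsWithin 0 {0}ᶜ, |u| ≤ 1 := by
      have : ∀ᶠ u : ℝ in nhds 0, |u| ≤ 1 := by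
        have := Metric.ball_mem_nhds (0:ℝ) one_pos
        filter_upwards [this] with u hu
        rw [Metric.mem_ball, Real.dist_eq, sub_zero] at hu
        exact hu.le
      exact this.filter_mono nhdsWithin_le_nhds
    filter_upwards [h1, self_mem_nhdsWithin] with u hu1 (hu : u ≠ 0)
    have h := Real.cos_bound hu1
    have hu2 : (0:ℝ) < u ^ 2 := by positivity
    rw [div_le_iff₀ hu2]
    have habs := (abs_sub_le_iff.1 h).1
    have : |u| ^ 4 = (u ^ 2) ^ 2 := by
      rw [← abs_pow]
      rw [abs_of_nonneg (by positivity)]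
      ring
    nlinarith [sq_nonneg u, sq_nonneg (u^2)]

lemma tendsto_sqrt_atTop : Tendsto Real.sqrt atTop atTop := by
  refine tendsto_atTop.2 fun b => ?_
  filter_upwards [eventually_ge_atTop (b ^ 2)] with x hx
  calc b ≤ |b| := le_abs_self b
    _ = Real.sqrt (b ^ 2) := (Real.sqrt_sq_eq_abs b).symm
    _ ≤ Real.sqrt x := Real.sqrt_le_sqrt hx

set_option maxHeartbeats 1000000 in
theorem besselI1_asymptotic' :
    Tendsto (fun x : ℝ => Real.sqrt (2 * Real.pi * x) * Real.exp (-x) * besselI1 x)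
      atTop (nhds 1) := by
  set g : ℝ → ℝ → ℝ := fun x => Set.indicator (Set.Ioc 0 (π * Real.sqrt x))
    (fun s => Real.exp (x * (Real.cos (s / Real.sqrt x) - 1)) * Real.cos (s / Real.sqrt x)) with hg
  set h : ℝ → ℝ := Set.indicator (Set.Ioi 0) (fun s => Real.exp (-(1/2) * s ^ 2)) with hh
  -- Step 1: dominated convergence
  have hInt : Tendsto (fun x : ℝ => ∫ s, g x s) atTop (nhds (∫ s, h s)) := by
    refine tendsto_integral_filter_of_dominated_convergence
      (fun s => Real.exp (-(2 / π ^ 2) * s ^ 2)) ?_ ?_ ?_ ?_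
    · filter_upwards with x
      exact (Continuous.aestronglyMeasurable (by fun_prop)).indicator measurableSet_Ioc
    · filter_upwards [eventually_ge_atTop (1:ℝ)] with x hx1
      have hx0 : (0:ℝ) < x := lt_of_lt_of_le one_pos hx1
      have hsx : (0:ℝ) < Real.sqrt x := Real.sqrt_pos.2 hx0
      filter_upwards with s
      by_cases hs : s ∈ Set.Ioc 0 (π * Real.sqrt x)
      · simp only [hg, Set.indicator_of_mem hs]
        set u := s / Real.sqrt x with hu
        have hu0 : 0 < u := div_pos hs.1 hsx
        have hupi : u ≤ π := by
          rw [hu, div_le_iff₀ hsx]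
          exact hs.2
        have hub : |u| ≤ π := by rwa [abs_of_pos hu0]
        have hcos := Real.cos_le_one_sub_mul_cos_sq hub
        have hxu : x * u ^ 2 = s ^ 2 := by
          rw [hu, div_pow, Real.sq_sqrt hx0.le]
          field_simp
        have hexp : x * (Real.cos u - 1) ≤ -(2 / π ^ 2) * s ^ 2 := by
          have : Real.cos u - 1 ≤ -(2 / π ^ 2) * u ^ 2 := by linarith
          calc x * (Real.cos u - 1) ≤ x * (-(2 / π ^ 2) * u ^ 2) :=
                mul_le_mul_of_nonneg_left this hx0.le
            _ = -(2 / π ^ 2) * (x * u ^ 2) := by ring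
            _ = -(2 / π ^ 2) * s ^ 2 := by rw [hxu]
        rw [norm_mul, Real.norm_eq_abs, Real.norm_eq_abs, Real.abs_exp]
        calc Real.exp (x * (Real.cos u - 1)) * |Real.cos u|
            ≤ Real.exp (x * (Real.cos u - 1)) * 1 :=
              mul_le_mul_of_nonneg_left (Real.abs_cos_le_one u) (Real.exp_nonneg _)
          _ = Real.exp (x * (Real.cos u - 1)) := mul_one _
          _ ≤ Real.exp (-(2 / π ^ 2) * s ^ 2) := Real.exp_le_exp.2 hexp
      · simp only [hg, Set.indicator_of_notMem hs]
        simpa using (Real.exp_nonneg _)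
    · exact integrable_exp_neg_mul_sq (by positivity)
    · have hae : ∀ᵐ s : ℝ, s ≠ 0 := by
        rw [ae_iff]
        simpa using Real.volume_singleton (a := 0)
      filter_upwards [hae] with s hs
      rcases lt_or_gt_of_ne hs with hneg | hpos
      · have hz : ∀ x : ℝ, g x s = 0 := by
          intro x
          have hnm : s ∉ Set.Ioc 0 (π * Real.sqrt x) := fun hmem =>
            absurd hmem.1 (not_lt.2 hneg.le)
          rw [hg]
          exact Set.indicator_of_notMem hnm _
        have hz' : h s = 0 := by
          rw [hh, Set.indicator_of_notMem]
          exact fun hmem => absurd hmem (not_lt.2 hneg.le)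
        rw [hz']
        simpa [hz] using tendsto_const_nhds (x := (0:ℝ)) (f := atTop (α := ℝ))
      · -- s > 0
        have hhs : h s = Real.exp (-(1/2) * s ^ 2) := Set.indicator_of_mem hpos _
        rw [hhs]
        have hu : Tendsto (fun x : ℝ => s / Real.sqrt x) atTop (nhds 0) :=
          tendsto_const_nhds.div_atTop _root_.tendsto_sqrt_atTop
        have hu' : Tendsto (fun x : ℝ => s / Real.sqrt x) atTop (nhdsWithin 0 {0}ᶜ) := by
          rw [tendsto_nhdsWithin_iff]
          refine ⟨hu, ?_⟩
          filter_upwards [eventually_gt_atTop (0:ℝ)] with x hx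
          have : 0 < s / Real.sqrt x := div_pos hpos (Real.sqrt_pos.2 hx)
          exact fun hc => absurd hc this.ne'
        have hA : Tendsto (fun x : ℝ => x * (Real.cos (s / Real.sqrt x) - 1)) atTop
            (nhds (-(1/2) * s ^ 2)) := by
          have h1 := (tendsto_cos_sub_one_div_sq.comp hu').const_mul (s ^ 2)
          have h2 : s ^ 2 * -(1/2) = -(1/2) * s ^ 2 := by ring
          rw [h2] at h1
          refine Tendsto.congr' ?_ h1
          filter_upwards [eventually_gt_atTop (0:ℝ)] with x hx
          have hsx : (0:ℝ) < Real.sqrt x := Real.sqrt_pos.2 hx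
          have hu2 : (s / Real.sqrt x) ^ 2 = s ^ 2 / x := by
            rw [div_pow, Real.sq_sqrt hx.le]
          simp only [Function.comp_apply, hu2]
          have hs2 : (s:ℝ) ^ 2 ≠ 0 := by positivity
          field_simp
        have hB : Tendsto (fun x : ℝ => Real.cos (s / Real.sqrt x)) atTop (nhds 1) := by
          have := (Real.continuous_cos.tendsto 0).comp hu
          simpa [Function.comp_def] using this
        have hC : Tendsto (fun x : ℝ =>
            Real.exp (x * (Real.cos (s / Real.sqrt x) - 1)) * Real.cos (s / Real.sqrt x))
            atTop (nhds (Real.exp (-(1/2) * s ^ 2) * 1)) :=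
          ((Real.continuous_exp.tendsto _).comp hA).mul hB
        rw [mul_one] at hC
        refine Tendsto.congr' ?_ hC
        filter_upwards [_root_.tendsto_sqrt_atTop.eventually_ge_atTop (s / π),
          eventually_gt_atTop (0:ℝ)] with x hx hx0
        have hmem : s ∈ Set.Ioc 0 (π * Real.sqrt x) := by
          constructor
          · exact hpos
          · rw [← div_le_iff₀' Real.pi_pos]
            exact hx
        rw [hg]
        exact (Set.indicator_of_mem hmem
          (fun t => Real.exp (x * (Real.cos (t / Real.sqrt x) - 1)) * Real.cos (t / Real.sqrt x))).symm
  -- Step 2: value of the limit integral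
  have hval : (∫ s, h s) = Real.sqrt (2 * π) / 2 := by
    rw [hh, MeasureTheory.integral_indicator measurableSet_Ioi]
    have := integral_gaussian_Ioi (1/2)
    rw [this]
    congr 1
    rw [show π / (1/2 : ℝ) = 2 * π by ring]
  rw [hval] at hInt
  have h2pi : (0:ℝ) ≤ 2 * π := by positivity
  have hfinal := hInt.const_mul (Real.sqrt (2 * π) / π)
  have hone : Real.sqrt (2 * π) / π * (Real.sqrt (2 * π) / 2) = 1 := by
    rw [div_mul_div_comm, Real.mul_self_sqrt h2pi, mul_comm π 2]
    exact div_self (by positivity)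
  rw [hone] at hfinal
  refine Tendsto.congr' ?_ hfinal
  filter_upwards [eventually_gt_atTop (0:ℝ)] with x hx
  have hsx : (0:ℝ) < Real.sqrt x := Real.sqrt_pos.2 hx
  set J := ∫ θ in (0:ℝ)..π, Real.exp (x * Real.cos θ) * Real.cos θ with hJ
  have stepA : (∫ s, g x s) = ∫ s in (0:ℝ)..(π * Real.sqrt x),
      Real.exp (x * (Real.cos (s / Real.sqrt x) - 1)) * Real.cos (s / Real.sqrt x) := by
    rw [hg, MeasureTheory.integral_indicator measurableSet_Ioc,
      ← intervalIntegral.integral_of_le (by positivity : (0:ℝ) ≤ π * Real.sqrt x)]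
  have stepB : (∫ s in (0:ℝ)..(π * Real.sqrt x),
      Real.exp (x * (Real.cos (s / Real.sqrt x) - 1)) * Real.cos (s / Real.sqrt x))
      = Real.exp (-x) * (Real.sqrt x * J) := by
    have heq : ∀ s : ℝ, Real.exp (x * (Real.cos (s / Real.sqrt x) - 1)) *
        Real.cos (s / Real.sqrt x)
        = Real.exp (-x) * (Real.exp (x * Real.cos (s / Real.sqrt x)) *
          Real.cos (s / Real.sqrt x)) := by
      intro s
      rw [← mul_assoc, ← Real.exp_add]
      congr 2
      ring
    rw [intervalIntegral.integral_congr (g := fun s => Real.exp (-x) *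
        (Real.exp (x * Real.cos (s / Real.sqrt x)) * Real.cos (s / Real.sqrt x)))
        (fun s _ => heq s)]
    rw [intervalIntegral.integral_const_mul]
    congr 1
    have := intervalIntegral.integral_comp_div (a := (0:ℝ)) (b := π * Real.sqrt x)
      (c := Real.sqrt x)
      (f := fun θ => Real.exp (x * Real.cos θ) * Real.cos θ) hsx.ne'
    rw [this, zero_div, mul_div_cancel_right₀ _ hsx.ne', smul_eq_mul]
  have hsqrtmul : Real.sqrt (2 * π * x) = Real.sqrt (2 * π) * Real.sqrt x := by
    rw [Real.sqrt_mul h2pi]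
  rw [besselI1_eq x, ← hJ, hsqrtmul, stepA, stepB]
  ring

end Aux

/-- `I₁(x)` is asymptotic to `e^x / √(2πx)` as `x → ∞`:
`√(2πx)·e^{−x}·I₁(x) → 1`. -/
theorem besselI1_asymptotic :
    Tendsto (fun x : ℝ => Real.sqrt (2 * Real.pi * x) * Real.exp (-x) * besselI1 x)
      atTop (nhds 1) := besselI1_asymptotic'
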